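/- Let T be a connected graded S-ring, P an S-subbimodule, and D(P) := T[z]/⟨P*⟩ the central extension, where P* is the set of external homogenizations of elements of P. Then the evaluation at z=1 satisfies ev_1(⟨P*⟩ ∩ T[z]^n) = P_n, where P_n := Σ_{i+j+k=n} T^{≤i} P^{≤j} T^{≤k}; consequently the kernel of the induced map φ_1 : D(P) → U(P) = T/⟨P⟩ equals (z−1)D(P), and D(P)/(z−1)D(P) ≅ U(P) as S-rings. -/

import Mathlib

variable {T : Type*} [Ring T]

/-- Projection onto the degree `n` homogeneous component. -/
noncomputable def projFun (𝒜 : ℕ → AddSubgroup T) [GradedRing 𝒜] (n : ℕ) (x : T) : T :=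
  (DirectSum.decompose 𝒜 x n : T)

lemma projFun_add (𝒜 : ℕ → AddSubgroup T) [GradedRing 𝒜] (n : ℕ) (x y : T) :
    projFun 𝒜 n (x + y) = projFun 𝒜 n x + projFun 𝒜 n y := by
  unfold projFun
  rw [DirectSum.decompose_add, DirectSum.add_apply, AddSubgroup.coe_add]

lemma projFun_neg (𝒜 : ℕ → AddSubgroup T) [GradedRing 𝒜] (n : ℕ) (x : T) :
    projFun 𝒜 n (-x) = - projFun 𝒜 n x := by
  unfold projFun
  rw [DirectSum.decompose_neg, DFinsupp.neg_apply, AddSubgroup.coe_neg]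

/-- The `S`-subbimodule `T^{≤ n}` of elements of degree at most `n`. -/
noncomputable def degLE (𝒜 : ℕ → AddSubgroup T) [GradedRing 𝒜] (n : ℕ) : AddSubgroup T where
  carrier := {x | ∀ m, n < m → projFun 𝒜 m x = 0}
  zero_mem' := by
    intro m hm
    unfold projFun
    rw [DirectSum.decompose_zero, DirectSum.zero_apply, AddSubgroup.coe_zero]
  add_mem' := by
    intro a b ha hb m hm
    rw [projFun_add, ha m hm, hb m hm, add_zero]
  neg_mem' := by
    intro a ha m hm
    rw [projFun_neg, ha m hm, neg_zero]

/-- `y` is the leading homogeneous part of `x`. -/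
def IsLH (𝒜 : ℕ → AddSubgroup T) [GradedRing 𝒜] (x y : T) : Prop :=
  (x = 0 ∧ y = 0) ∨
    ∃ m, y = projFun 𝒜 m x ∧ y ≠ 0 ∧ ∀ k, m < k → projFun 𝒜 k x = 0

/-- `LH(X)`, the set of leading homogeneous parts of elements of `X`. -/
def leadSet (𝒜 : ℕ → AddSubgroup T) [GradedRing 𝒜] (X : Set T) : Set T :=
  {y | ∃ x ∈ X, IsLH 𝒜 x y}

/-- An additive subgroup of `T` which is an `S = T^0`-subbimodule. -/
def IsSubbimodule (𝒜 : ℕ → AddSubgroup T) (X : AddSubgroup T) : Prop :=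
  ∀ s ∈ 𝒜 0, ∀ x ∈ X, s * x ∈ X ∧ x * s ∈ X

/-- `T` is strongly graded: `T^{n+1} = T^1 T^n`. -/
def StronglyGraded (𝒜 : ℕ → AddSubgroup T) : Prop :=
  ∀ n, (𝒜 (n + 1) : Set T) ⊆
    ↑(AddSubgroup.closure {y : T | ∃ a ∈ 𝒜 1, ∃ b ∈ 𝒜 n, y = a * b})

/-- The canonical filtration `P_n = Σ_{i+j+k=n} T^{≤i} P^{≤j} T^{≤k}` of the ideal `⟨P⟩`. -/
noncomputable def Pcan (𝒜 : ℕ → AddSubgroup T) [GradedRing 𝒜] (P : AddSubgroup T) (n : ℕ) :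
    AddSubgroup T :=
  AddSubgroup.closure {x : T | ∃ i j k : ℕ, i + j + k = n ∧
    ∃ a ∈ degLE 𝒜 i, ∃ b ∈ P ⊓ degLE 𝒜 j, ∃ c ∈ degLE 𝒜 k, x = a * b * c}

/-- `T[z]^n`, the degree-`n` component of the graded polynomial ring `T[z]`,
namely `Σ_{i≤n} T^i z^{n-i}`. -/
def TzDeg (𝒜 : ℕ → AddSubgroup T) [GradedRing 𝒜] (n : ℕ) : Set (Polynomial T) :=
  {f | ∀ j : ℕ, (j ≤ n → f.coeff j ∈ 𝒜 (n - j)) ∧ (n < j → f.coeff j = 0)}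

/-- `f` is the external homogenization `a*` of `a`. -/
def IsExtHom (𝒜 : ℕ → AddSubgroup T) [GradedRing 𝒜] (a : T) (f : Polynomial T) : Prop :=
  (a = 0 ∧ f = 0) ∨
    ∃ d : ℕ, projFun 𝒜 d a ≠ 0 ∧ (∀ k, d < k → projFun 𝒜 k a = 0) ∧
      ∀ j : ℕ, f.coeff j = if j ≤ d then projFun 𝒜 (d - j) a else 0

/-- `P* ⊆ T[z]`, the set of external homogenizations of elements of `P`. -/
def starSet (𝒜 : ℕ → AddSubgroup T) [GradedRing 𝒜] (P : Set T) : Set (Polynomial T) :=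
  {f | ∃ a ∈ P, IsExtHom 𝒜 a f}
open Polynomial Finset
section Helpers

variable (𝒜 : ℕ → AddSubgroup T) [GradedRing 𝒜]

lemma projFun_of_mem {m : ℕ} {x : T} (hx : x ∈ 𝒜 m) : projFun 𝒜 m x = x :=
  DirectSum.decompose_of_mem_same 𝒜 hx

lemma projFun_of_mem_ne {m n : ℕ} {x : T} (hx : x ∈ 𝒜 m) (h : m ≠ n) : projFun 𝒜 n x = 0 :=
  DirectSum.decompose_of_mem_ne 𝒜 hx h

lemma projFun_zero (n : ℕ) : projFun 𝒜 n (0 : T) = 0 := by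
  unfold projFun
  rw [DirectSum.decompose_zero, DirectSum.zero_apply, AddSubgroup.coe_zero]

lemma projFun_mem (n : ℕ) (x : T) : projFun 𝒜 n x ∈ 𝒜 n := SetLike.coe_mem _

noncomputable def projHom (n : ℕ) : T →+ T where
  toFun := projFun 𝒜 n
  map_zero' := projFun_zero 𝒜 n
  map_add' := projFun_add 𝒜 n

lemma sum_range_projFun {d : ℕ} {x : T}
    (hd : ∀ k, d < k → projFun 𝒜 k x = 0) :
    ∑ m ∈ Finset.range (d + 1), projFun 𝒜 m x = x := by
  classical
  refine Eq.trans (Finset.sum_subset ?_ ?_).symm (DirectSum.sum_support_decompose 𝒜 x)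
  · intro i hi
    rw [Finset.mem_range]
    by_contra hle
    exact (DFinsupp.mem_support_iff.mp hi)
      (by ext; simpa [projFun] using hd i (by omega))
  · intro i _ hi
    have : (DirectSum.decompose 𝒜 x) i = 0 := by
      by_contra h; exact hi (DFinsupp.mem_support_iff.mpr h)
    simpa [projFun] using congrArg (fun y : 𝒜 i => (y : T)) this

end Helpers
section HelpersB

variable (𝒜 : ℕ → AddSubgroup T) [GradedRing 𝒜]

lemma exists_top_degree {x : T} (hx : x ≠ 0) :
    ∃ d, projFun 𝒜 d x ≠ 0 ∧ ∀ k, d < k → projFun 𝒜 k x = 0 := by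
  classical
  have hne : (DirectSum.decompose 𝒜 x).support.Nonempty := by
    rw [Finset.nonempty_iff_ne_empty]
    intro h
    apply hx
    have := DirectSum.sum_support_decompose 𝒜 x
    rw [h, Finset.sum_empty] at this
    exact this.symm
  refine ⟨(DirectSum.decompose 𝒜 x).support.max' hne, ?_, ?_⟩
  · have hm := (DirectSum.decompose 𝒜 x).support.max'_mem hne
    rw [DFinsupp.mem_support_iff] at hm
    intro h
    exact hm (by ext; simpa [projFun] using h)
  · intro k hk
    have : k ∉ (DirectSum.decompose 𝒜 x).support := by
      intro hmem
      exact absurd (Finset.le_max' _ _ hmem) (by omega)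
    rw [DFinsupp.notMem_support_iff] at this
    simpa [projFun] using congrArg (fun y : 𝒜 k => (y : T)) this

variable {𝒜}

lemma mem_degLE_of_mem {m n : ℕ} {x : T} (h : m ≤ n) (hx : x ∈ 𝒜 m) : x ∈ degLE 𝒜 n :=
  fun k hk => projFun_of_mem_ne 𝒜 hx (by omega)

lemma projFun_mem_degLE (m : ℕ) (x : T) : projFun 𝒜 m x ∈ degLE 𝒜 m :=
  mem_degLE_of_mem le_rfl (projFun_mem 𝒜 m x)

lemma degLE_mono {m n : ℕ} (h : m ≤ n) : degLE 𝒜 m ≤ degLE 𝒜 n :=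
  fun _x hx k hk => hx k (by omega)

lemma one_mem_degLE (n : ℕ) : (1 : T) ∈ degLE 𝒜 n :=
  mem_degLE_of_mem (Nat.zero_le n) SetLike.GradedOne.one_mem

lemma degLE_mul {i j : ℕ} {x y : T} (hx : x ∈ degLE 𝒜 i) (hy : y ∈ degLE 𝒜 j) :
    x * y ∈ degLE 𝒜 (i + j) := by
  have hxs := sum_range_projFun 𝒜 hx
  have hys := sum_range_projFun 𝒜 hy
  intro m hm
  rw [← hxs, ← hys, Finset.sum_mul_sum]
  rw [show projFun 𝒜 m = projHom 𝒜 m from rfl, map_sum]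
  refine Finset.sum_eq_zero fun s hs => ?_
  rw [map_sum]
  refine Finset.sum_eq_zero fun t ht => ?_
  rw [Finset.mem_range] at hs ht
  exact projFun_of_mem_ne 𝒜
    (SetLike.mul_mem_graded (projFun_mem 𝒜 s x) (projFun_mem 𝒜 t y)) (by omega)

end HelpersB
section HelpersC

variable {𝒜 : ℕ → AddSubgroup T} [GradedRing 𝒜] {P : AddSubgroup T}

lemma Pcan_mono {m n : ℕ} (h : m ≤ n) : Pcan 𝒜 P m ≤ Pcan 𝒜 P n := by
  refine AddSubgroup.closure_mono ?_
  rintro x ⟨i, j, k, hsum, a, ha, b, hb, c, hc, rfl⟩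
  exact ⟨i + (n - m), j, k, by omega, a, degLE_mono (by omega) ha, b, hb, c, hc, rfl⟩

lemma mem_Pcan_of_mem {n : ℕ} {b : T} (hb : b ∈ P ⊓ degLE 𝒜 n) : b ∈ Pcan 𝒜 P n :=
  AddSubgroup.subset_closure
    ⟨0, n, 0, by omega, 1, one_mem_degLE 0, b, hb, 1, one_mem_degLE 0, by
      rw [one_mul, mul_one]⟩

lemma degLE_mul_Pcan {s m : ℕ} {a x : T} (ha : a ∈ degLE 𝒜 s) (hx : x ∈ Pcan 𝒜 P m) :
    a * x ∈ Pcan 𝒜 P (s + m) := by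
  induction hx using AddSubgroup.closure_induction with
  | mem y hy =>
    obtain ⟨i, j, k, hsum, a', ha', b, hb, c, hc, rfl⟩ := hy
    refine AddSubgroup.subset_closure ⟨s + i, j, k, by omega, a * a', degLE_mul ha ha',
      b, hb, c, hc, by rw [mul_assoc, mul_assoc, mul_assoc]⟩
  | zero => rw [mul_zero]; exact zero_mem _
  | add y z _ _ hy hz => rw [mul_add]; exact add_mem hy hz
  | neg y _ hy => rw [mul_neg]; exact neg_mem hy

lemma Pcan_mul_degLE {s m : ℕ} {c x : T} (hc : c ∈ degLE 𝒜 s) (hx : x ∈ Pcan 𝒜 P m) :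
    x * c ∈ Pcan 𝒜 P (m + s) := by
  induction hx using AddSubgroup.closure_induction with
  | mem y hy =>
    obtain ⟨i, j, k, hsum, a', ha', b, hb, c', hc', rfl⟩ := hy
    refine AddSubgroup.subset_closure ⟨i, j, k + s, by omega, a', ha',
      b, hb, c' * c, degLE_mul hc' hc, by rw [mul_assoc]⟩
  | zero => rw [zero_mul]; exact zero_mem _
  | add y z _ _ hy hz => rw [add_mul]; exact add_mem hy hz
  | neg y _ hy => rw [neg_mul]; exact neg_mem hy

end HelpersC
section HelpersD

open Polynomial

variable (𝒜 : ℕ → AddSubgroup T) [GradedRing 𝒜]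

/-- `ev_1` applied to the degree-`n` homogeneous component of `f ∈ T[z]`. -/
noncomputable def evalProj (n : ℕ) : Polynomial T →+ T where
  toFun f := ∑ j ∈ Finset.range (n + 1), projFun 𝒜 (n - j) (f.coeff j)
  map_zero' := by simp [projFun_zero]
  map_add' f g := by
    simp only [coeff_add, projFun_add, Finset.sum_add_distrib]

lemma evalProj_apply (n : ℕ) (f : Polynomial T) :
    evalProj 𝒜 n f = ∑ j ∈ Finset.range (n + 1), projFun 𝒜 (n - j) (f.coeff j) := rfl

variable {𝒜}

lemma coeff_monomial_mul' (k : ℕ) (a : T) (f : Polynomial T) (j : ℕ) :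
    ((monomial k a) * f).coeff j = if k ≤ j then a * f.coeff (j - k) else 0 := by
  rw [← C_mul_X_pow_eq_monomial, mul_assoc, X_pow_mul, coeff_C_mul, coeff_mul_X_pow']
  split <;> simp

lemma coeff_mul_monomial' (k : ℕ) (a : T) (f : Polynomial T) (j : ℕ) :
    (f * (monomial k a)).coeff j = if k ≤ j then f.coeff (j - k) * a else 0 := by
  rw [← C_mul_X_pow_eq_monomial, ← X_pow_mul, ← mul_assoc, coeff_mul_C, coeff_mul_X_pow']
  split <;> simp

lemma evalProj_monomial_mul {s : ℕ} {a : T} (ha : a ∈ 𝒜 s) (k n : ℕ) (f : Polynomial T) :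
    evalProj 𝒜 n ((monomial k a) * f)
      = if s + k ≤ n then a * evalProj 𝒜 (n - s - k) f else 0 := by
  classical
  have hterm : ∀ j, projFun 𝒜 (n - j) ((monomial k a * f).coeff j)
      = if k ≤ j ∧ s ≤ n - j then a * projFun 𝒜 (n - j - s) (f.coeff (j - k)) else 0 := by
    intro j
    rw [coeff_monomial_mul']
    by_cases hk : k ≤ j
    · rw [if_pos hk, projFun]
      rw [DirectSum.coe_decompose_mul_of_left_mem 𝒜 (n - j) ha]
      by_cases hs : s ≤ n - j
      · rw [if_pos hs, if_pos ⟨hk, hs⟩]; rfl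
      · rw [if_neg hs, if_neg (by tauto)]
    · rw [if_neg hk, if_neg (by tauto), projFun_zero]
  rw [evalProj_apply]
  by_cases hsk : s + k ≤ n
  · rw [if_pos hsk]
    rw [evalProj_apply, Finset.mul_sum]
    refine ((Finset.sum_subset ?_ ?_).symm.trans
      ((Finset.sum_map (Finset.range (n - s - k + 1))
        ⟨fun j => j + k, add_left_injective k⟩
        (fun j => projFun 𝒜 (n - j) ((monomial k a * f).coeff j))).trans ?_))
    · intro j hj
      simp only [Finset.mem_map, Finset.mem_range, Function.Embedding.coeFn_mk] at hj
      obtain ⟨j', hj', rfl⟩ := hj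
      rw [Finset.mem_range]; omega
    · intro j hj hj2
      simp only [Finset.mem_map, Finset.mem_range, Function.Embedding.coeFn_mk] at hj hj2
      rw [hterm, if_neg]
      intro ⟨h1, h2⟩
      exact hj2 ⟨j - k, by omega, by omega⟩
    · refine Finset.sum_congr rfl fun j' hj' => ?_
      rw [Finset.mem_range] at hj'
      simp only [Function.Embedding.coeFn_mk]
      rw [hterm, if_pos ⟨by omega, by omega⟩]
      congr 2
      · omega
      · congr 1; omega
  · rw [if_neg hsk]
    refine Finset.sum_eq_zero fun j hj => ?_
    rw [Finset.mem_range] at hj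
    rw [hterm, if_neg (by omega)]

lemma evalProj_mul_monomial {s : ℕ} {a : T} (ha : a ∈ 𝒜 s) (k n : ℕ) (f : Polynomial T) :
    evalProj 𝒜 n (f * (monomial k a))
      = if s + k ≤ n then evalProj 𝒜 (n - s - k) f * a else 0 := by
  classical
  have hterm : ∀ j, projFun 𝒜 (n - j) ((f * monomial k a).coeff j)
      = if k ≤ j ∧ s ≤ n - j then projFun 𝒜 (n - j - s) (f.coeff (j - k)) * a else 0 := by
    intro j
    rw [coeff_mul_monomial']
    by_cases hk : k ≤ j
    · rw [if_pos hk, projFun]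
      rw [DirectSum.coe_decompose_mul_of_right_mem 𝒜 (n - j) ha]
      by_cases hs : s ≤ n - j
      · rw [if_pos hs, if_pos ⟨hk, hs⟩]; rfl
      · rw [if_neg hs, if_neg (by tauto)]
    · rw [if_neg hk, if_neg (by tauto), projFun_zero]
  rw [evalProj_apply]
  by_cases hsk : s + k ≤ n
  · rw [if_pos hsk]
    rw [evalProj_apply, Finset.sum_mul]
    refine ((Finset.sum_subset ?_ ?_).symm.trans
      ((Finset.sum_map (Finset.range (n - s - k + 1))
        ⟨fun j => j + k, add_left_injective k⟩
        (fun j => projFun 𝒜 (n - j) ((f * monomial k a).coeff j))).trans ?_))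
    · intro j hj
      simp only [Finset.mem_map, Finset.mem_range, Function.Embedding.coeFn_mk] at hj
      obtain ⟨j', hj', rfl⟩ := hj
      rw [Finset.mem_range]; omega
    · intro j hj hj2
      simp only [Finset.mem_map, Finset.mem_range, Function.Embedding.coeFn_mk] at hj hj2
      rw [hterm, if_neg]
      intro ⟨h1, h2⟩
      exact hj2 ⟨j - k, by omega, by omega⟩
    · refine Finset.sum_congr rfl fun j' hj' => ?_
      rw [Finset.mem_range] at hj'
      simp only [Function.Embedding.coeFn_mk]
      rw [hterm, if_pos ⟨by omega, by omega⟩]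
      congr 2
      · omega
      · congr 1; omega
  · rw [if_neg hsk]
    refine Finset.sum_eq_zero fun j hj => ?_
    rw [Finset.mem_range] at hj
    rw [hterm, if_neg (by omega)]

lemma evalProj_eq_eval_one {n : ℕ} {f : Polynomial T} (hf : f ∈ TzDeg 𝒜 n) :
    evalProj 𝒜 n f = Polynomial.eval 1 f := by
  have hdeg : f.natDegree < n + 1 := by
    rw [Nat.lt_succ_iff, natDegree_le_iff_coeff_eq_zero]
    exact fun N hN => (hf N).2 hN
  rw [eval_eq_sum_range' hdeg, evalProj_apply]
  refine Finset.sum_congr rfl fun j hj => ?_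
  rw [Finset.mem_range, Nat.lt_succ_iff] at hj
  rw [one_pow, mul_one]
  exact projFun_of_mem 𝒜 ((hf j).1 hj)

end HelpersD
section HelpersE

open Polynomial

variable {𝒜 : ℕ → AddSubgroup T} [GradedRing 𝒜]

lemma TzDeg_zero_mem (n : ℕ) : (0 : Polynomial T) ∈ TzDeg 𝒜 n :=
  fun j => ⟨fun _ => by rw [coeff_zero]; exact zero_mem _, fun _ => coeff_zero j⟩

lemma TzDeg_add {n : ℕ} {f g : Polynomial T} (hf : f ∈ TzDeg 𝒜 n) (hg : g ∈ TzDeg 𝒜 n) :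
    f + g ∈ TzDeg 𝒜 n := fun j =>
  ⟨fun h => by rw [coeff_add]; exact add_mem ((hf j).1 h) ((hg j).1 h),
   fun h => by rw [coeff_add, (hf j).2 h, (hg j).2 h, add_zero]⟩

lemma TzDeg_neg {n : ℕ} {f : Polynomial T} (hf : f ∈ TzDeg 𝒜 n) :
    -f ∈ TzDeg 𝒜 n := fun j =>
  ⟨fun h => by rw [coeff_neg]; exact neg_mem ((hf j).1 h),
   fun h => by rw [coeff_neg, (hf j).2 h, neg_zero]⟩

lemma TzDeg_mul {m m' : ℕ} {f g : Polynomial T} (hf : f ∈ TzDeg 𝒜 m) (hg : g ∈ TzDeg 𝒜 m') :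
    f * g ∈ TzDeg 𝒜 (m + m') := by
  intro j
  rw [coeff_mul]
  constructor
  · intro hj
    refine AddSubgroup.sum_mem _ fun p hp => ?_
    rw [Finset.HasAntidiagonal.mem_antidiagonal] at hp
    by_cases h1 : p.1 ≤ m
    · by_cases h2 : p.2 ≤ m'
      · have : (m - p.1) + (m' - p.2) = m + m' - j := by omega
        exact this ▸ SetLike.mul_mem_graded ((hf p.1).1 h1) ((hg p.2).1 h2)
      · rw [(hg p.2).2 (by omega), mul_zero]; exact zero_mem _
    · rw [(hf p.1).2 (by omega), zero_mul]; exact zero_mem _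
  · intro hj
    refine Finset.sum_eq_zero fun p hp => ?_
    rw [Finset.HasAntidiagonal.mem_antidiagonal] at hp
    by_cases h1 : p.1 ≤ m
    · rw [(hg p.2).2 (by omega), mul_zero]
    · rw [(hf p.1).2 (by omega), zero_mul]

lemma one_mem_TzDeg : (1 : Polynomial T) ∈ TzDeg 𝒜 0 := by
  intro j
  constructor
  · intro hj
    interval_cases j
    rw [coeff_one_zero]
    exact SetLike.one_mem_graded 𝒜
  · intro hj
    rw [coeff_one, if_neg (by omega)]

lemma X_pow_mem_TzDeg (t : ℕ) : (Polynomial.X ^ t : Polynomial T) ∈ TzDeg 𝒜 t := by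
  intro j
  rw [coeff_X_pow]
  constructor
  · intro hj
    by_cases h : j = t
    · rw [if_pos h, h, Nat.sub_self]
      exact SetLike.one_mem_graded 𝒜
    · rw [if_neg h]; exact zero_mem _
  · intro hj
    rw [if_neg (by omega)]

/-- The external homogenization of `y` to degree `d`. -/
noncomputable def homPoly (𝒜 : ℕ → AddSubgroup T) [GradedRing 𝒜] (d : ℕ) (y : T) :
    Polynomial T :=
  ∑ j ∈ Finset.range (d + 1), Polynomial.monomial j (projFun 𝒜 (d - j) y)

lemma homPoly_coeff (d : ℕ) (y : T) (j : ℕ) :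
    (homPoly 𝒜 d y).coeff j = if j ≤ d then projFun 𝒜 (d - j) y else 0 := by
  classical
  rw [homPoly, finset_sum_coeff]
  simp only [coeff_monomial]
  rw [Finset.sum_ite_eq' (Finset.range (d + 1)) j (fun i => projFun 𝒜 (d - i) y)]
  by_cases h : j ≤ d
  · rw [if_pos (Finset.mem_range.mpr (by omega)), if_pos h]
  · rw [if_neg (by rw [Finset.mem_range]; omega), if_neg h]

lemma homPoly_mem_TzDeg {d : ℕ} {y : T} : homPoly 𝒜 d y ∈ TzDeg 𝒜 d := by
  intro j
  rw [homPoly_coeff]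
  exact ⟨fun h => by rw [if_pos h]; exact projFun_mem 𝒜 (d - j) y,
    fun h => by rw [if_neg (by omega)]⟩

lemma eval_one_homPoly {d : ℕ} {y : T} (hy : ∀ k, d < k → projFun 𝒜 k y = 0) :
    Polynomial.eval 1 (homPoly 𝒜 d y) = y := by
  rw [← evalProj_eq_eval_one homPoly_mem_TzDeg, evalProj_apply]
  have : ∀ j ∈ Finset.range (d + 1),
      projFun 𝒜 (d - j) ((homPoly 𝒜 d y).coeff j) = projFun 𝒜 (d - j) y := by
    intro j hj
    rw [Finset.mem_range] at hj
    rw [homPoly_coeff, if_pos (by omega)]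
    exact projFun_of_mem 𝒜 (projFun_mem 𝒜 (d - j) y)
  rw [Finset.sum_congr rfl this]
  have hr : ∑ x ∈ Finset.range (d + 1), projFun 𝒜 (d - x) y
      = ∑ x ∈ Finset.range (d + 1), projFun 𝒜 x y := by
    rw [← Finset.sum_range_reflect (fun m => projFun 𝒜 m y) (d + 1)]
    refine Finset.sum_congr rfl fun j hj => ?_
    rw [Finset.mem_range] at hj
    congr 1
  rw [hr]
  exact sum_range_projFun 𝒜 hy

lemma isExtHom_homPoly {d : ℕ} {y : T} (h1 : projFun 𝒜 d y ≠ 0)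
    (h2 : ∀ k, d < k → projFun 𝒜 k y = 0) : IsExtHom 𝒜 y (homPoly 𝒜 d y) :=
  Or.inr ⟨d, h1, h2, fun j => homPoly_coeff d y j⟩

lemma isExtHom_eq_homPoly {y : T} {f : Polynomial T} (h : IsExtHom 𝒜 y f) :
    (y = 0 ∧ f = 0) ∨ ∃ d, f = homPoly 𝒜 d y ∧ (∀ k, d < k → projFun 𝒜 k y = 0) := by
  rcases h with h | ⟨d, h1, h2, h3⟩
  · exact Or.inl h
  · refine Or.inr ⟨d, Polynomial.ext fun j => ?_, h2⟩
    rw [h3 j, homPoly_coeff]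

/-- Evaluation at `1` as a ring homomorphism. -/
noncomputable def evalOneHom : Polynomial T →+* T :=
  Polynomial.eval₂RingHom' (RingHom.id T) 1 (fun a => Commute.one_right a)

lemma evalOneHom_apply (f : Polynomial T) : evalOneHom f = Polynomial.eval 1 f := rfl

lemma eval_one_mul (f g : Polynomial T) :
    Polynomial.eval 1 (f * g) = Polynomial.eval 1 f * Polynomial.eval 1 g := by
  rw [← evalOneHom_apply, ← evalOneHom_apply, ← evalOneHom_apply, map_mul]

lemma eval_one_eq_zero_exists {f : Polynomial T} (hf : Polynomial.eval 1 f = 0) :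
    ∃ h : Polynomial T, f = (Polynomial.X - 1) * h := by
  have key : ∀ f : Polynomial T, ∃ h : Polynomial T,
      f - Polynomial.C (Polynomial.eval 1 f) = (Polynomial.X - 1) * h := by
    intro f
    induction f using Polynomial.induction_on' with
    | add p q hp hq =>
      obtain ⟨h1, e1⟩ := hp
      obtain ⟨h2, e2⟩ := hq
      refine ⟨h1 + h2, ?_⟩
      rw [eval_add, C_add, mul_add, ← e1, ← e2]
      abel
    | monomial k a =>
      refine ⟨C a * ∑ i ∈ Finset.range k, Polynomial.X ^ i, ?_⟩
      have hc : Polynomial.C a * (Polynomial.X - 1) = (Polynomial.X - 1) * Polynomial.C a := by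
        rw [mul_sub, sub_mul, X_mul, mul_one, one_mul]
      rw [eval_monomial, one_pow, mul_one, ← mul_assoc, ← hc, mul_assoc, mul_geom_sum,
        ← C_mul_X_pow_eq_monomial, mul_sub, mul_one]
  obtain ⟨h, e⟩ := key f
  rw [hf, map_zero, sub_zero] at e
  exact ⟨h, e⟩

end HelpersE
section HelpersF

open Polynomial

variable (𝒜 : ℕ → AddSubgroup T) [GradedRing 𝒜] (P : AddSubgroup T)

/-- Polynomials all of whose `evalProj`s land in the canonical filtration. -/
def Qset : Set (Polynomial T) := {f | ∀ n, evalProj 𝒜 n f ∈ Pcan 𝒜 P n}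

variable {𝒜 P}

lemma Qset_monomial_mul_mem {s k : ℕ} {a : T} (ha : a ∈ 𝒜 s) {f : Polynomial T}
    (hf : f ∈ Qset 𝒜 P) : (monomial k a) * f ∈ Qset 𝒜 P := by
  intro n
  rw [evalProj_monomial_mul ha]
  split
  · exact Pcan_mono (by omega) (degLE_mul_Pcan (mem_degLE_of_mem le_rfl ha) (hf _))
  · exact zero_mem _

lemma Qset_mul_monomial_mem {s k : ℕ} {a : T} (ha : a ∈ 𝒜 s) {f : Polynomial T}
    (hf : f ∈ Qset 𝒜 P) : f * (monomial k a) ∈ Qset 𝒜 P := by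
  intro n
  rw [evalProj_mul_monomial ha]
  split
  · exact Pcan_mono (by omega) (Pcan_mul_degLE (mem_degLE_of_mem le_rfl ha) (hf _))
  · exact zero_mem _

lemma Qset_mul_left {f : Polynomial T} (hf : f ∈ Qset 𝒜 P) (x : Polynomial T) :
    x * f ∈ Qset 𝒜 P := by
  classical
  induction x using Polynomial.induction_on' with
  | add p q hp hq =>
    intro n
    rw [add_mul, map_add]
    exact add_mem (hp n) (hq n)
  | monomial k a =>
    have hsplit : (Polynomial.monomial k a) * f
        = ∑ s ∈ (DirectSum.decompose 𝒜 a).support,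
            Polynomial.monomial k (projFun 𝒜 s a) * f := by
      rw [← Finset.sum_mul]
      congr 1
      rw [← map_sum (Polynomial.monomial k)]
      congr 1
      exact (DirectSum.sum_support_decompose 𝒜 a).symm
    rw [hsplit]
    intro n
    rw [map_sum]
    exact AddSubgroup.sum_mem _ fun s _ =>
      Qset_monomial_mul_mem (projFun_mem 𝒜 s a) hf n

lemma Qset_mul_right {f : Polynomial T} (hf : f ∈ Qset 𝒜 P) (x : Polynomial T) :
    f * x ∈ Qset 𝒜 P := by
  classical
  induction x using Polynomial.induction_on' with
  | add p q hp hq =>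
    intro n
    rw [mul_add, map_add]
    exact add_mem (hp n) (hq n)
  | monomial k a =>
    have hsplit : f * (Polynomial.monomial k a)
        = ∑ s ∈ (DirectSum.decompose 𝒜 a).support,
            f * Polynomial.monomial k (projFun 𝒜 s a) := by
      rw [← Finset.mul_sum]
      congr 1
      rw [← map_sum (Polynomial.monomial k)]
      congr 1
      exact (DirectSum.sum_support_decompose 𝒜 a).symm
    rw [hsplit]
    intro n
    rw [map_sum]
    exact AddSubgroup.sum_mem _ fun s _ =>
      Qset_mul_monomial_mem (projFun_mem 𝒜 s a) hf n

variable (𝒜 P) in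
/-- `Qset` as a two-sided ideal. -/
noncomputable def Qideal : TwoSidedIdeal (Polynomial T) :=
  TwoSidedIdeal.mk' (Qset 𝒜 P)
    (fun n => by rw [map_zero]; exact zero_mem _)
    (fun hx hy n => by rw [map_add]; exact add_mem (hx n) (hy n))
    (fun hx n => by rw [map_neg]; exact neg_mem (hx n))
    (fun {x y} hy => Qset_mul_left hy x)
    (fun {x y} hx => Qset_mul_right hx y)

lemma mem_Qideal {f : Polynomial T} : f ∈ Qideal 𝒜 P ↔ f ∈ Qset 𝒜 P :=
  TwoSidedIdeal.mem_mk' _ _ _ _ _ _ f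

lemma starSet_subset_Qset : starSet 𝒜 (P : Set T) ⊆ Qset 𝒜 P := by
  rintro f ⟨b, hb, hext⟩
  rcases isExtHom_eq_homPoly hext with ⟨rfl, rfl⟩ | ⟨d, rfl, htop⟩
  · intro n
    rw [map_zero]
    exact zero_mem _
  · intro n
    by_cases hnd : n = d
    · subst hnd
      rw [evalProj_eq_eval_one homPoly_mem_TzDeg, eval_one_homPoly htop]
      exact mem_Pcan_of_mem (AddSubgroup.mem_inf.mpr ⟨hb, fun k hk => htop k hk⟩)
    · have hz : evalProj 𝒜 n (homPoly 𝒜 d b) = 0 := by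
        rw [evalProj_apply]
        refine Finset.sum_eq_zero fun j hj => ?_
        rw [Finset.mem_range] at hj
        rw [homPoly_coeff]
        by_cases hjd : j ≤ d
        · rw [if_pos hjd]
          exact projFun_of_mem_ne 𝒜 (projFun_mem 𝒜 (d - j) b) (by omega)
        · rw [if_neg hjd, projFun_zero]
      rw [hz]
      exact zero_mem _

end HelpersF
open Polynomial

/-- Lemma 2.17 (1): `ev_1(⟨P*⟩ ∩ T[z]^n) = P_n`; consequently the kernel of the induced
map `D(P) → U(P)` is `(z-1)D(P)` and `D(P)/(z-1)D(P) ≅ U(P)`. -/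
theorem stmt_15 (𝒜 : ℕ → AddSubgroup T) [GradedRing 𝒜]
    (P : AddSubgroup T) (hP : IsSubbimodule 𝒜 P) :
    (∀ n, (fun f : Polynomial T => Polynomial.eval 1 f) ''
          ((TwoSidedIdeal.span (starSet 𝒜 (P : Set T)) : Set (Polynomial T)) ∩ TzDeg 𝒜 n)
        = (Pcan 𝒜 P n : Set T)) ∧
      ∀ f : Polynomial T,
        Polynomial.eval 1 f ∈ TwoSidedIdeal.span (P : Set T)
          ↔ ∃ g ∈ TwoSidedIdeal.span (starSet 𝒜 (P : Set T)), ∃ h : Polynomial T,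
              f = g + (Polynomial.X - 1) * h := by
  classical
  constructor
  · intro n
    ext x
    constructor
    · rintro ⟨f, ⟨hfspan, hfdeg⟩, rfl⟩
      have hfQ : f ∈ Qset 𝒜 P :=
        mem_Qideal.mp (TwoSidedIdeal.mem_span_iff.mp (SetLike.mem_coe.mp hfspan)
          (Qideal 𝒜 P) (fun g hg => mem_Qideal.mpr (starSet_subset_Qset hg)))
      have := hfQ n
      rw [evalProj_eq_eval_one hfdeg] at this
      exact SetLike.mem_coe.mpr this
    · intro hx
      have hx' : x ∈ Pcan 𝒜 P n := SetLike.mem_coe.mp hx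
      clear hx
      induction hx' using AddSubgroup.closure_induction with
      | mem y hy =>
        obtain ⟨i, j, k, hsum, a, ha, b, hbmem, c, hc, rfl⟩ := hy
        have hbP : b ∈ P := (AddSubgroup.mem_inf.mp hbmem).1
        have hbD : b ∈ degLE 𝒜 j := (AddSubgroup.mem_inf.mp hbmem).2
        by_cases ha0 : a = 0
        · exact ⟨0, ⟨SetLike.mem_coe.mpr (TwoSidedIdeal.zero_mem _), TzDeg_zero_mem n⟩,
            by show Polynomial.eval 1 (0:Polynomial T) = _; rw [eval_zero, ha0, zero_mul, zero_mul]⟩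
        by_cases hb0 : b = 0
        · exact ⟨0, ⟨SetLike.mem_coe.mpr (TwoSidedIdeal.zero_mem _), TzDeg_zero_mem n⟩,
            by show Polynomial.eval 1 (0:Polynomial T) = _; rw [eval_zero, hb0, mul_zero, zero_mul]⟩
        by_cases hc0 : c = 0
        · exact ⟨0, ⟨SetLike.mem_coe.mpr (TwoSidedIdeal.zero_mem _), TzDeg_zero_mem n⟩,
            by show Polynomial.eval 1 (0:Polynomial T) = _; rw [eval_zero, hc0, mul_zero]⟩
        obtain ⟨da, hda1, hda2⟩ := exists_top_degree 𝒜 ha0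
        obtain ⟨db, hdb1, hdb2⟩ := exists_top_degree 𝒜 hb0
        obtain ⟨dc, hdc1, hdc2⟩ := exists_top_degree 𝒜 hc0
        have hdai : da ≤ i := by
          by_contra hlt
          exact hda1 (ha da (by omega))
        have hdbj : db ≤ j := by
          by_contra hlt
          exact hdb1 (hbD db (by omega))
        have hdck : dc ≤ k := by
          by_contra hlt
          exact hdc1 (hc dc (by omega))
        set t := n - (da + db + dc) with ht
        refine ⟨homPoly 𝒜 da a * homPoly 𝒜 db b * (homPoly 𝒜 dc c * Polynomial.X ^ t),
          ⟨?_, ?_⟩, ?_⟩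
        · have hstar : homPoly 𝒜 db b ∈ TwoSidedIdeal.span (starSet 𝒜 (P : Set T)) :=
            TwoSidedIdeal.subset_span ⟨b, hbP, isExtHom_homPoly hdb1 hdb2⟩
          exact SetLike.mem_coe.mpr (TwoSidedIdeal.mul_mem_right _ _ _
            (TwoSidedIdeal.mul_mem_left _ _ _ hstar))
        · have h1 := TzDeg_mul (TzDeg_mul (homPoly_mem_TzDeg (𝒜 := 𝒜) (d := da) (y := a))
            (homPoly_mem_TzDeg (𝒜 := 𝒜) (d := db) (y := b)))
            (TzDeg_mul (homPoly_mem_TzDeg (𝒜 := 𝒜) (d := dc) (y := c)) (X_pow_mem_TzDeg t))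
          have heq : da + db + (dc + t) = n := by omega
          rwa [heq] at h1
        · show Polynomial.eval 1 _ = a * b * c
          rw [eval_one_mul, eval_one_mul, eval_one_mul, eval_one_homPoly hda2,
            eval_one_homPoly hdb2, eval_one_homPoly hdc2, X_pow_eq_monomial,
            eval_monomial, one_pow, mul_one, mul_one]
      | zero =>
        exact ⟨0, ⟨SetLike.mem_coe.mpr (TwoSidedIdeal.zero_mem _), TzDeg_zero_mem n⟩,
          eval_zero⟩
      | add y z _ _ hy hz =>
        obtain ⟨f1, ⟨hs1, hd1⟩, he1⟩ := hy
        obtain ⟨f2, ⟨hs2, hd2⟩, he2⟩ := hz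
        exact ⟨f1 + f2, ⟨SetLike.mem_coe.mpr
          (TwoSidedIdeal.add_mem _ (SetLike.mem_coe.mp hs1) (SetLike.mem_coe.mp hs2)),
          TzDeg_add hd1 hd2⟩, by show Polynomial.eval 1 _ = _; rw [eval_add]; exact congrArg₂ (·+·) he1 he2⟩
      | neg y _ hy =>
        obtain ⟨f1, ⟨hs1, hd1⟩, he1⟩ := hy
        exact ⟨-f1, ⟨SetLike.mem_coe.mpr
          (TwoSidedIdeal.neg_mem _ (SetLike.mem_coe.mp hs1)), TzDeg_neg hd1⟩,
          by show Polynomial.eval 1 _ = _; rw [eval_neg]; exact congrArg Neg.neg he1⟩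
  · intro f
    constructor
    · intro hf
      let B : TwoSidedIdeal T := TwoSidedIdeal.mk'
        {x | ∃ g ∈ TwoSidedIdeal.span (starSet 𝒜 (P : Set T)), Polynomial.eval 1 g = x}
        ⟨0, TwoSidedIdeal.zero_mem _, eval_zero⟩
        (fun {x y} hx hy => by
          obtain ⟨g1, hg1, e1⟩ := hx
          obtain ⟨g2, hg2, e2⟩ := hy
          exact ⟨g1 + g2, TwoSidedIdeal.add_mem _ hg1 hg2, by rw [eval_add, e1, e2]⟩)
        (fun {x} hx => by
          obtain ⟨g, hg, e⟩ := hx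
          exact ⟨-g, TwoSidedIdeal.neg_mem _ hg, by rw [eval_neg, e]⟩)
        (fun {x y} hy => by
          obtain ⟨g, hg, e⟩ := hy
          exact ⟨Polynomial.C x * g, TwoSidedIdeal.mul_mem_left _ _ _ hg,
            by rw [eval_one_mul, eval_C, e]⟩)
        (fun {x y} hx => by
          obtain ⟨g, hg, e⟩ := hx
          exact ⟨g * Polynomial.C y, TwoSidedIdeal.mul_mem_right _ _ _ hg,
            by rw [eval_one_mul, eval_C, e]⟩)
      have hPB : (P : Set T) ⊆ (B : Set T) := by
        intro b hb
        refine SetLike.mem_coe.mpr ((TwoSidedIdeal.mem_mk' _ _ _ _ _ _ b).mpr ?_)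
        by_cases hb0 : b = 0
        · subst hb0
          exact ⟨0, TwoSidedIdeal.zero_mem _, eval_zero⟩
        · obtain ⟨d, h1, h2⟩ := exists_top_degree 𝒜 hb0
          exact ⟨homPoly 𝒜 d b,
            TwoSidedIdeal.subset_span ⟨b, hb, isExtHom_homPoly h1 h2⟩,
            eval_one_homPoly h2⟩
      have hfB := TwoSidedIdeal.mem_span_iff.mp hf B hPB
      obtain ⟨g, hg, he⟩ := (TwoSidedIdeal.mem_mk' _ _ _ _ _ _ _).mp hfB
      obtain ⟨h, hh⟩ := eval_one_eq_zero_exists (f := f - g)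
        (by rw [eval_sub, he, sub_self])
      exact ⟨g, hg, h, by rw [← hh, add_sub_cancel]⟩
    · rintro ⟨g, hg, h, rfl⟩
      rw [eval_add, eval_one_mul, eval_sub, eval_X, eval_one, sub_self, zero_mul, add_zero]
      let J : TwoSidedIdeal (Polynomial T) := TwoSidedIdeal.mk'
        {q : Polynomial T | Polynomial.eval 1 q ∈ TwoSidedIdeal.span (P : Set T)}
        (by rw [Set.mem_setOf_eq, eval_zero]; exact TwoSidedIdeal.zero_mem _)
        (fun {x y} hx hy => by
          rw [Set.mem_setOf_eq, eval_add]
          exact TwoSidedIdeal.add_mem _ hx hy)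
        (fun {x} hx => by
          rw [Set.mem_setOf_eq, eval_neg]
          exact TwoSidedIdeal.neg_mem _ hx)
        (fun {x y} hy => by
          rw [Set.mem_setOf_eq, eval_one_mul]
          exact TwoSidedIdeal.mul_mem_left _ _ _ hy)
        (fun {x y} hx => by
          rw [Set.mem_setOf_eq, eval_one_mul]
          exact TwoSidedIdeal.mul_mem_right _ _ _ hx)
      have hsub : starSet 𝒜 (P : Set T) ⊆ (J : Set (Polynomial T)) := by
        rintro q ⟨b, hb, hext⟩
        refine SetLike.mem_coe.mpr ((TwoSidedIdeal.mem_mk' _ _ _ _ _ _ q).mpr ?_)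
        rw [Set.mem_setOf_eq]
        rcases isExtHom_eq_homPoly hext with ⟨hb0, rfl⟩ | ⟨d, rfl, htop⟩
        · rw [eval_zero]
          exact TwoSidedIdeal.zero_mem _
        · rw [eval_one_homPoly htop]
          exact TwoSidedIdeal.subset_span hb
      have hgJ := TwoSidedIdeal.mem_span_iff.mp hg J
        (fun q hq => SetLike.mem_coe.mp (hsub hq))
      exact (TwoSidedIdeal.mem_mk' _ _ _ _ _ _ g).mp hgJ
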